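/- Let k ⊆ ℂ be a subfield with algebraic closure k̄ ⊆ ℂ, and α ∈ ℂⁿ. Then the closure Z(α, k̄) of α in the k̄-Zariski topology coincides with the unique irreducible component of the closure Z(α, k) of α in the k-Zariski topology that contains α. -/

import Mathlib

/-! Over an integral extension `R → S` every prime of `S` is minimal over the extension of its
contraction (incomparability). Since `k̄[x]` is integral over `k[x]` and the vanishing ideal
`I(α, k̄)` contracts to `I(α, k)`, the prime `I(α, k̄)` is minimal over `I(α, k)·k̄[x]`. Any minimal
prime whose zero locus contains `α` lies inside `I(α, k̄)`, hence equals it by minimality. -/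

/-- The zero locus in `ℂⁿ` of a set of polynomials with coefficients in a
subfield `F ⊆ ℂ`. -/
def zeroLocus (F : Subfield ℂ) (n : ℕ) (I : Set (MvPolynomial (Fin n) F)) :
    Set (Fin n → ℂ) :=
  {z | ∀ f ∈ I, MvPolynomial.aeval z f = 0}

theorem mem_zeroLocus_iff_le_ker_aeval {F : Subfield ℂ} {n : ℕ}
    (I : Ideal (MvPolynomial (Fin n) F)) (z : Fin n → ℂ) :
    z ∈ zeroLocus F n I ↔ I ≤ RingHom.ker (MvPolynomial.aeval z : MvPolynomial (Fin n) F →ₐ[F] ℂ) :=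
  Iff.rfl

namespace MvPolynomial

variable {σ R S A : Type*} [CommRing R] [CommRing S] [CommRing A] [Algebra R S] [Algebra S A]
  [Algebra R A] [IsScalarTower R S A]

theorem comap_map_ker_aeval (x : σ → A) :
    (RingHom.ker (aeval x : MvPolynomial σ S →ₐ[S] A)).comap (map (algebraMap R S)) =
      RingHom.ker (aeval x : MvPolynomial σ R →ₐ[R] A) := by
  ext p
  simp only [Ideal.mem_comap, RingHom.mem_ker, aeval_map_algebraMap]

theorem ker_aeval_mem_minimalPrimes_map [IsDomain A] [Algebra.IsIntegral R S] (x : σ → A) :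
    RingHom.ker (aeval x : MvPolynomial σ S →ₐ[S] A) ∈
      ((RingHom.ker (aeval x : MvPolynomial σ R →ₐ[R] A)).map
        (map (algebraMap R S))).minimalPrimes := by
  let := algebraMvPolynomial (σ := σ) (R := R) (S := S)
  have : (RingHom.ker (aeval x : MvPolynomial σ S →ₐ[S] A)).IsPrime := RingHom.ker_isPrime _
  have h := Ideal.IsIntegral.mem_minimalPrimes_map_under (R := MvPolynomial σ R)
    (RingHom.ker (aeval x : MvPolynomial σ S →ₐ[S] A))
  rwa [Ideal.under, algebraMap_def, comap_map_ker_aeval] at h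

end MvPolynomial

/-- (3.1.2.)  Let `k ⊆ ℂ` be a subfield with algebraic closure `k̄ ⊆ ℂ` and `α ∈ ℂⁿ`.
Let `𝔭_α ⊆ k[x]` be the ideal of polynomials over `k` vanishing at `α`, so that
`Z(α,k)` is its zero locus, whose irreducible components correspond to the minimal
primes of the extension `𝔭_α·k̄[x]`.  Then the vanishing ideal of `α` over `k̄` is
such a minimal prime, and its zero locus `Z(α,k̄)` coincides with the zero locus of
any minimal prime containing `α` in its zero locus: `Z(α,k̄)` is the unique
irreducible component of `Z(α,k)` containing `α`. -/
theorem stmt_11 (k kbar : Subfield ℂ) (hle : k ≤ kbar)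
    (halg : ∀ z : ℂ, z ∈ kbar ↔ IsAlgebraic k z)
    (n : ℕ) (α : Fin n → ℂ) :
    letI Ik : Ideal (MvPolynomial (Fin n) k) :=
      RingHom.ker ((MvPolynomial.aeval α : MvPolynomial (Fin n) k →ₐ[k] ℂ) :
        MvPolynomial (Fin n) k →+* ℂ)
    letI Ikbar : Ideal (MvPolynomial (Fin n) kbar) :=
      RingHom.ker ((MvPolynomial.aeval α : MvPolynomial (Fin n) kbar →ₐ[kbar] ℂ) :
        MvPolynomial (Fin n) kbar →+* ℂ)
    letI E : Ideal (MvPolynomial (Fin n) kbar) :=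
      Ideal.map (MvPolynomial.map (Subfield.inclusion hle)) Ik
    Ikbar ∈ E.minimalPrimes ∧
    α ∈ zeroLocus kbar n Ikbar ∧
    ∀ P ∈ E.minimalPrimes, α ∈ zeroLocus kbar n P →
      zeroLocus kbar n P = zeroLocus kbar n Ikbar := by
  let : Algebra k kbar := (Subfield.inclusion hle).toAlgebra
  have : IsScalarTower k kbar ℂ := .of_algebraMap_eq fun _ ↦ rfl
  have : Algebra.IsIntegral k kbar := ⟨fun z ↦
    (isIntegral_algHom_iff (IsScalarTower.toAlgHom k kbar ℂ) Subtype.val_injective).mp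
      ((halg z).mp z.2).isIntegral⟩
  have hmin := MvPolynomial.ker_aeval_mem_minimalPrimes_map (R := k) (S := kbar) α
  refine ⟨hmin, (mem_zeroLocus_iff_le_ker_aeval _ α).mpr le_rfl, fun P hP hαP ↦ ?_⟩
  have hPle := (mem_zeroLocus_iff_le_ker_aeval P α).mp hαP
  exact congrArg _ (le_antisymm hPle (hmin.2 hP.1 hPle))
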